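/- arXiv:2403.15714 — 2 statements merged into one kernel-verified Lean document; each statement's English description precedes it below -/
import Mathlib

section
/- With the elastic moment tensors m^{ij}_{kl} and the quantities 𝔼^{(1,i)}, 𝔼^{(2,i)} defined as in the context, it holds that m^{22}_{12} = m^{22}_{21} = (μ/(2(κ−1)))·Im 𝔼^{(1,1)} + (μ/2)·Im 𝔼^{(1,2)}. -/
open MeasureTheory Complex

/-!
With `G = g²₂` and `z = x₁ + i x₂`, pointwise `Re (conj (i x₁) G) = x₁ Im G`,
`Re (conj x₂ G) = x₂ Re G`, and `Im (z G)`, `Im (conj z G)` are the sum and the difference of these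
two densities. Since `G` is a real combination of `φ¹, φ²`, it inherits the rotation condition
`Im ∫ conj z G = 0`, so both moments equal `½ Im ∫ z G`, which is real-linear in `𝔼^{(1,1)}, 𝔼^{(1,2)}`.
Compact support makes all weighted densities integrable.
-/

theorem MeasureTheory.Integrable.continuous_mul_of_measure_compl_compact_eq_zero
    {α 𝕜 : Type*} [TopologicalSpace α] [MeasurableSpace α] [OpensMeasurableSpace α]
    [NormedRing 𝕜] [SecondCountableTopology 𝕜] {σ : Measure α} {K : Set α}
    (hK : IsCompact K) (hσK : σ Kᶜ = 0) {f g : α → 𝕜} (hf : Continuous f)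
    (hg : Integrable g σ) : Integrable (fun x => f x * g x) σ := by
  obtain ⟨C, hC⟩ := hK.exists_bound_of_continuousOn hf.continuousOn
  refine hg.bdd_mul (c := C) hf.aestronglyMeasurable ?_
  filter_upwards [measure_eq_zero_iff_ae_notMem.mp hσK] with x hx
  exact hC x (by simpa using hx)

section MomentsOfDensity

variable {σ : Measure ℂ} {K : Set ℂ} (hK : IsCompact K) (hσK : σ Kᶜ = 0)
  {G : ℂ → ℂ} (hG : Integrable G σ)
include hK hσK hG

theorem re_integral_conj_I_mul_re_mul :
    (∫ z, (starRingEnd ℂ) (I * (z.re : ℂ)) * G z ∂σ).re = ∫ z, z.re * (G z).im ∂σ := by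
  have h := hG.continuous_mul_of_measure_compl_compact_eq_zero hK hσK
    (f := fun z => (starRingEnd ℂ) (I * (z.re : ℂ))) (by fun_prop)
  refine (integral_re h).symm.trans ?_
  congr 1 with z
  simp

theorem re_integral_conj_im_mul :
    (∫ z, (starRingEnd ℂ) (z.im : ℂ) * G z ∂σ).re = ∫ z, z.im * (G z).re ∂σ := by
  have h := hG.continuous_mul_of_measure_compl_compact_eq_zero hK hσK
    (f := fun z => (starRingEnd ℂ) (z.im : ℂ)) (by fun_prop)
  refine (integral_re h).symm.trans ?_
  congr 1 with z
  simp

theorem im_integral_mul :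
    (∫ z, z * G z ∂σ).im = ∫ z, z.re * (G z).im ∂σ + ∫ z, z.im * (G z).re ∂σ := by
  have h := hG.continuous_mul_of_measure_compl_compact_eq_zero hK hσK continuous_id
  have h₁ : Integrable (fun z : ℂ => z.re * (G z).im) σ :=
    hG.im.continuous_mul_of_measure_compl_compact_eq_zero hK hσK continuous_re
  have h₂ : Integrable (fun z : ℂ => z.im * (G z).re) σ :=
    hG.re.continuous_mul_of_measure_compl_compact_eq_zero hK hσK continuous_im
  rw [← integral_add h₁ h₂]
  exact (integral_im h).symm

theorem im_integral_conj_mul :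
    (∫ z, (starRingEnd ℂ) z * G z ∂σ).im
      = ∫ z, z.re * (G z).im ∂σ - ∫ z, z.im * (G z).re ∂σ := by
  have h := hG.continuous_mul_of_measure_compl_compact_eq_zero hK hσK continuous_conj
  have h₁ : Integrable (fun z : ℂ => z.re * (G z).im) σ :=
    hG.im.continuous_mul_of_measure_compl_compact_eq_zero hK hσK continuous_re
  have h₂ : Integrable (fun z : ℂ => z.im * (G z).re) σ :=
    hG.re.continuous_mul_of_measure_compl_compact_eq_zero hK hσK continuous_im
  rw [← integral_sub h₁ h₂]
  refine (integral_im h).symm.trans ?_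
  congr 1 with z
  simp only [RCLike.mul_im, RCLike.conj_re, RCLike.conj_im, RCLike.re_to_complex,
    RCLike.im_to_complex]
  ring

variable (hrot : (∫ z, (starRingEnd ℂ) z * G z ∂σ).im = 0)
include hrot

theorem re_integral_conj_I_mul_re_mul_eq_half_im :
    (∫ z, (starRingEnd ℂ) (I * (z.re : ℂ)) * G z ∂σ).re = (∫ z, z * G z ∂σ).im / 2 := by
  rw [im_integral_conj_mul hK hσK hG] at hrot
  rw [re_integral_conj_I_mul_re_mul hK hσK hG, im_integral_mul hK hσK hG]
  linarith

theorem re_integral_conj_im_mul_eq_half_im :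
    (∫ z, (starRingEnd ℂ) (z.im : ℂ) * G z ∂σ).re = (∫ z, z * G z ∂σ).im / 2 := by
  rw [im_integral_conj_mul hK hσK hG] at hrot
  rw [re_integral_conj_im_mul hK hσK hG, im_integral_mul hK hσK hG]
  linarith

end MomentsOfDensity

theorem im_integral_mul_ofReal_mul_add {σ : Measure ℂ} {K : Set ℂ} (hK : IsCompact K)
    (hσK : σ Kᶜ = 0) {w φ₁ φ₂ : ℂ → ℂ} (hw : Continuous w) (hφ₁ : Integrable φ₁ σ)
    (hφ₂ : Integrable φ₂ σ) (a b : ℝ) :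
    (∫ z, w z * ((a : ℂ) * φ₁ z + (b : ℂ) * φ₂ z) ∂σ).im
      = a * (∫ z, w z * φ₁ z ∂σ).im + b * (∫ z, w z * φ₂ z ∂σ).im := by
  have h₁ := hφ₁.continuous_mul_of_measure_compl_compact_eq_zero hK hσK hw
  have h₂ := hφ₂.continuous_mul_of_measure_compl_compact_eq_zero hK hσK hw
  calc (∫ z, w z * ((a : ℂ) * φ₁ z + (b : ℂ) * φ₂ z) ∂σ).im
      = ((a : ℂ) * ∫ z, w z * φ₁ z ∂σ + (b : ℂ) * ∫ z, w z * φ₂ z ∂σ).im := by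
        rw [← integral_const_mul, ← integral_const_mul,
          ← integral_add (h₁.const_mul _) (h₂.const_mul _)]
        congr 2 with z
        ring
    _ = a * (∫ z, w z * φ₁ z ∂σ).im + b * (∫ z, w z * φ₂ z ∂σ).im := by simp

theorem stmt_12_general (σ : Measure ℂ)
    (K : Set ℂ) (hK : IsCompact K) (hσK : σ Kᶜ = 0)
    (μ κ : ℝ)
    (φ₁ φ₂ : ℂ → ℂ)
    (hφ₁ : Integrable φ₁ σ) (hφ₂ : Integrable φ₂ σ)
    (hrot₁ : (∫ z, (starRingEnd ℂ) z * φ₁ z ∂σ).im = 0)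
    (hrot₂ : (∫ z, (starRingEnd ℂ) z * φ₂ z ∂σ).im = 0)
    (g22 : ℂ → ℂ)
    (hg22 : ∀ z, g22 z = ((μ / (κ - 1) : ℝ) : ℂ) * φ₁ z + (μ : ℂ) * φ₂ z)
    (w12 w21 : ℂ → ℂ)
    (hw12 : ∀ z, w12 z = Complex.I * (z.re : ℂ))
    (hw21 : ∀ z, w21 z = (z.im : ℂ))
    (E11 E12 : ℂ)
    (hE11 : E11 = ∫ z, z * φ₁ z ∂σ) (hE12 : E12 = ∫ z, z * φ₂ z ∂σ)
    (m2212 : ℝ) (hm2212 : m2212 = (∫ z, (starRingEnd ℂ) (w12 z) * g22 z ∂σ).re)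
    (m2221 : ℝ) (hm2221 : m2221 = (∫ z, (starRingEnd ℂ) (w21 z) * g22 z ∂σ).re)
    :
    m2212 = m2221 ∧ m2221 = μ / (2 * (κ - 1)) * E11.im + μ / 2 * E12.im := by
  have hG : Integrable g22 σ := by
    rw [funext hg22]
    exact (hφ₁.const_mul _).add (hφ₂.const_mul _)
  have hrot : (∫ z, (starRingEnd ℂ) z * g22 z ∂σ).im = 0 := by
    simp_rw [hg22]
    rw [im_integral_mul_ofReal_mul_add hK hσK continuous_conj hφ₁ hφ₂, hrot₁, hrot₂]
    ring
  have hmoment : (∫ z, z * g22 z ∂σ).im = μ / (κ - 1) * E11.im + μ * E12.im := by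
    simp_rw [hg22]
    rw [im_integral_mul_ofReal_mul_add (w := fun z => z) hK hσK continuous_id hφ₁ hφ₂,
      hE11, hE12]
  simp_rw [hw12, hw21] at hm2212 hm2221
  rw [hm2212, hm2221, re_integral_conj_I_mul_re_mul_eq_half_im hK hσK hG hrot,
    re_integral_conj_im_mul_eq_half_im hK hσK hG hrot, hmoment, div_mul_eq_div_div]
  exact ⟨rfl, by ring⟩

/-- Elastic moment tensor identity from Theorem 3.2 of the paper (complex formulation). -/
theorem stmt_12 (σ : Measure ℂ) [IsFiniteMeasure σ]
    (K : Set ℂ) (hK : IsCompact K) (hσK : σ Kᶜ = 0)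
    (μ κ : ℝ) (hμ : 0 < μ) (hκ : 1 < κ)
    (φ₁ φ₂ φ₃ : ℂ → ℂ)
    (hφ₁ : Integrable φ₁ σ) (hφ₂ : Integrable φ₂ σ) (hφ₃ : Integrable φ₃ σ)
    (hmean₁ : ∫ z, φ₁ z ∂σ = 0) (hmean₂ : ∫ z, φ₂ z ∂σ = 0) (hmean₃ : ∫ z, φ₃ z ∂σ = 0)
    (hrot₁ : (∫ z, (starRingEnd ℂ) z * φ₁ z ∂σ).im = 0)
    (hrot₂ : (∫ z, (starRingEnd ℂ) z * φ₂ z ∂σ).im = 0)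
    (hrot₃ : (∫ z, (starRingEnd ℂ) z * φ₃ z ∂σ).im = 0)
    (g11 g22 g12 g21 : ℂ → ℂ)
    (hg11 : ∀ z, g11 z = ((μ / (κ - 1) : ℝ) : ℂ) * φ₁ z - (μ : ℂ) * φ₂ z)
    (hg22 : ∀ z, g22 z = ((μ / (κ - 1) : ℝ) : ℂ) * φ₁ z + (μ : ℂ) * φ₂ z)
    (hg12 : ∀ z, g12 z = (μ : ℂ) * φ₃ z)
    (hg21 : ∀ z, g21 z = (μ : ℂ) * φ₃ z)
    (w11 w12 w21 w22 : ℂ → ℂ)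
    (hw11 : ∀ z, w11 z = (z.re : ℂ))
    (hw12 : ∀ z, w12 z = Complex.I * (z.re : ℂ))
    (hw21 : ∀ z, w21 z = (z.im : ℂ))
    (hw22 : ∀ z, w22 z = Complex.I * (z.im : ℂ))
    (E11 E12 E13 E21 E22 E23 : ℂ)
    (hE11 : E11 = ∫ z, z * φ₁ z ∂σ) (hE12 : E12 = ∫ z, z * φ₂ z ∂σ)
    (hE13 : E13 = ∫ z, z * φ₃ z ∂σ)
    (hE21 : E21 = ∫ z, z * (starRingEnd ℂ) (φ₁ z) ∂σ)
    (hE22 : E22 = ∫ z, z * (starRingEnd ℂ) (φ₂ z) ∂σ)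
    (hE23 : E23 = ∫ z, z * (starRingEnd ℂ) (φ₃ z) ∂σ)
    (m2212 : ℝ) (hm2212 : m2212 = (∫ z, (starRingEnd ℂ) (w12 z) * g22 z ∂σ).re)
    (m2221 : ℝ) (hm2221 : m2221 = (∫ z, (starRingEnd ℂ) (w21 z) * g22 z ∂σ).re)
    :
    m2212 = m2221 ∧ m2221 = μ / (2 * (κ - 1)) * E11.im + μ / 2 * E12.im :=
  stmt_12_general σ K hK hσK μ κ φ₁ φ₂ hφ₁ hφ₂ hrot₁ hrot₂ g22 hg22 w12 w21 hw12 hw21 E11 E12 hE11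
    hE12 m2212 hm2212 m2221 hm2221
end

section
/- Suppose, in addition to the setting of the context, that the elastic moment tensors satisfy the symmetry relations m^{ij}_{kl} = m^{ji}_{kl} = m^{ij}_{lk} = m^{kl}_{ij} for all i,j,k,l ∈ {1,2}. Then the following three identities hold: Re 𝔼^{(1,1)} = −(κ−1)·Re 𝔼^{(2,2)}, Re 𝔼^{(1,3)} = −Im 𝔼^{(1,2)}, and Im 𝔼^{(1,1)} = (κ−1)·Re 𝔼^{(2,3)}. -/
/-!
Write `z = x₁ + i x₂` and `Aᵢ = ∫ x₁ φⁱ dσ`, `Bᵢ = ∫ x₂ φⁱ dσ` (integrable, as `σ` has compact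
support). Then `𝔼^{(1,i)} = Aᵢ + i Bᵢ`, `conj 𝔼^{(2,i)} = ∫ conj(z) φⁱ dσ = Aᵢ - i Bᵢ`, and each
`m^{ij}_{kl}` is the real or imaginary part of a real combination of the `Aᵢ`, `Bᵢ`. The three
symmetries `m^{11}_{22} = m^{22}_{11}`, `m^{12}_{11} = m^{11}_{12}`, `m^{12}_{22} = m^{22}_{12}`,
together with the rotation conditions for `φ¹` and `φ²`, are then linear equations in the real
and imaginary parts of the `Aᵢ`, `Bᵢ` from which the three identities follow.
-/

open MeasureTheory Complex ComplexConjugate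

theorem MeasureTheory.Integrable.continuous_mul_of_measure_compl_eq_zero
    {X R : Type*} [TopologicalSpace X] [T2Space X] [MeasurableSpace X] [OpensMeasurableSpace X]
    [NormedRing R] [SecondCountableTopologyEither X R] {μ : Measure X} {K : Set X}
    {g f : X → R} (hf : Integrable f μ) (hK : IsCompact K) (hμK : μ Kᶜ = 0)
    (hg : Continuous g) : Integrable (fun x => g x * f x) μ := by
  have hμ : μ.restrict K = μ := Measure.restrict_eq_self_of_ae_mem (ae_iff.mpr hμK)
  rw [← hμ] at hf ⊢
  exact IntegrableOn.continuousOn_mul hg.continuousOn hf hK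

section Linearity

variable {α : Type*} [MeasurableSpace α] {ν : Measure α} {f φ ψ : α → ℂ}

theorem integral_mul_const_mul (c : ℂ) :
    ∫ x, f x * (c * φ x) ∂ν = c * ∫ x, f x * φ x ∂ν := by
  simp only [mul_left_comm (f _) c, integral_const_mul]

theorem integral_mul_add_mul (c d : ℂ) (hφ : Integrable (fun x => f x * φ x) ν)
    (hψ : Integrable (fun x => f x * ψ x) ν) :
    ∫ x, f x * (c * φ x + d * ψ x) ∂ν = c * ∫ x, f x * φ x ∂ν + d * ∫ x, f x * ψ x ∂ν := by
  have hcφ : Integrable (fun x => f x * (c * φ x)) ν :=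
    (hφ.const_mul c).congr (.of_forall fun _ => mul_left_comm ..)
  have hdψ : Integrable (fun x => f x * (d * ψ x)) ν :=
    (hψ.const_mul d).congr (.of_forall fun _ => mul_left_comm ..)
  simp only [mul_add, integral_add hcφ hdψ, integral_mul_const_mul]

theorem integral_mul_sub_mul (c d : ℂ) (hφ : Integrable (fun x => f x * φ x) ν)
    (hψ : Integrable (fun x => f x * ψ x) ν) :
    ∫ x, f x * (c * φ x - d * ψ x) ∂ν = c * ∫ x, f x * φ x ∂ν - d * ∫ x, f x * ψ x ∂ν := by
  have hcφ : Integrable (fun x => f x * (c * φ x)) ν :=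
    (hφ.const_mul c).congr (.of_forall fun _ => mul_left_comm ..)
  have hdψ : Integrable (fun x => f x * (d * ψ x)) ν :=
    (hψ.const_mul d).congr (.of_forall fun _ => mul_left_comm ..)
  simp only [mul_sub, integral_sub hcφ hdψ, integral_mul_const_mul]

theorem re_integral_conj_I_mul_ofReal (u : α → ℝ) (g : α → ℂ) :
    (∫ x, conj (I * (u x : ℂ)) * g x ∂ν).re = (∫ x, (u x : ℂ) * g x ∂ν).im := by
  simp only [map_mul, conj_I, conj_ofReal, neg_mul, mul_assoc, integral_neg, integral_const_mul]
  simp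

end Linearity

section Moments

variable {σ : Measure ℂ} {φ : ℂ → ℂ}

theorem integral_mul_eq_re_add_im (hre : Integrable (fun z => (z.re : ℂ) * φ z) σ)
    (him : Integrable (fun z => (z.im : ℂ) * φ z) σ) :
    ∫ z, z * φ z ∂σ = ∫ z, (z.re : ℂ) * φ z ∂σ + I * ∫ z, (z.im : ℂ) * φ z ∂σ := by
  rw [← integral_const_mul, ← integral_add hre (him.const_mul I)]
  congr 1 with z
  linear_combination φ z * (re_add_im z).symm

theorem integral_conj_mul_eq_re_sub_im (hre : Integrable (fun z => (z.re : ℂ) * φ z) σ)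
    (him : Integrable (fun z => (z.im : ℂ) * φ z) σ) :
    ∫ z, conj z * φ z ∂σ = ∫ z, (z.re : ℂ) * φ z ∂σ - I * ∫ z, (z.im : ℂ) * φ z ∂σ := by
  rw [← integral_const_mul, ← integral_sub hre (him.const_mul I)]
  congr 1 with z
  have hconj : conj z = z.re - z.im * I := by apply Complex.ext <;> simp
  linear_combination φ z * hconj

theorem integral_mul_conj_eq_conj_integral :
    ∫ z, z * conj (φ z) ∂σ = conj (∫ z, conj z * φ z ∂σ) := by
  rw [← integral_conj]
  simp [mul_comm]

end Moments

theorem moment_identities_of_symmetry {μ κ : ℝ} (hμ : 0 < μ) (hκ : 1 < κ)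
    {A₁ A₂ A₃ B₁ B₂ B₃ : ℂ}
    (hrot₁ : (A₁ - I * B₁).im = 0) (hrot₂ : (A₂ - I * B₂).im = 0)
    (h₁ : (((μ / (κ - 1) : ℝ) : ℂ) * B₁ - (μ : ℂ) * B₂).im
      = (((μ / (κ - 1) : ℝ) : ℂ) * A₁ + (μ : ℂ) * A₂).re)
    (h₂ : ((μ : ℂ) * A₃).re = (((μ / (κ - 1) : ℝ) : ℂ) * A₁ - (μ : ℂ) * A₂).im)
    (h₃ : ((μ : ℂ) * B₃).im = (((μ / (κ - 1) : ℝ) : ℂ) * A₁ + (μ : ℂ) * A₂).im) :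
    (A₁ + I * B₁).re = -(κ - 1) * (conj (A₂ - I * B₂)).re ∧
      (A₃ + I * B₃).re = -(A₂ + I * B₂).im ∧
      (A₁ + I * B₁).im = (κ - 1) * (conj (A₃ - I * B₃)).re := by
  have hμ₀ : μ ≠ 0 := hμ.ne'
  have hκ₁ : κ - 1 ≠ 0 := sub_ne_zero.mpr hκ.ne'
  simp only [sub_re, sub_im, add_re, add_im, re_ofReal_mul, im_ofReal_mul, I_mul_re, I_mul_im,
    conj_re, sub_neg_eq_add] at *
  field_simp at h₁ h₂ h₃
  refine ⟨?_, ?_, ?_⟩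
  · linear_combination -h₁
  · apply mul_left_cancel₀ hκ₁
    linear_combination h₂ - h₃ - (κ - 1) * hrot₂
  · linear_combination -h₂ - h₃ - hrot₁

theorem stmt_13_general (σ : Measure ℂ)
    (K : Set ℂ) (hK : IsCompact K) (hσK : σ Kᶜ = 0)
    (μ κ : ℝ) (hμ : 0 < μ) (hκ : 1 < κ)
    (φ₁ φ₂ φ₃ : ℂ → ℂ)
    (hφ₁ : Integrable φ₁ σ) (hφ₂ : Integrable φ₂ σ) (hφ₃ : Integrable φ₃ σ)
    (hrot₁ : (∫ z, (starRingEnd ℂ) z * φ₁ z ∂σ).im = 0)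
    (hrot₂ : (∫ z, (starRingEnd ℂ) z * φ₂ z ∂σ).im = 0)
    (G : Fin 2 → Fin 2 → ℂ → ℂ)
    (hG11 : ∀ z, G 0 0 z = ((μ / (κ - 1) : ℝ) : ℂ) * φ₁ z - (μ : ℂ) * φ₂ z)
    (hG22 : ∀ z, G 1 1 z = ((μ / (κ - 1) : ℝ) : ℂ) * φ₁ z + (μ : ℂ) * φ₂ z)
    (hG21 : ∀ z, G 1 0 z = (μ : ℂ) * φ₃ z)
    (W : Fin 2 → Fin 2 → ℂ → ℂ)
    (hW11 : ∀ z, W 0 0 z = (z.re : ℂ))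
    (hW12 : ∀ z, W 0 1 z = Complex.I * (z.re : ℂ))
    (hW22 : ∀ z, W 1 1 z = Complex.I * (z.im : ℂ))
    (m : Fin 2 → Fin 2 → Fin 2 → Fin 2 → ℝ)
    (hm : ∀ i j k l, m i j k l = (∫ z, (starRingEnd ℂ) (W k l z) * G j i z ∂σ).re)
    (hsym : ∀ i j k l, m i j k l = m j i k l ∧ m i j k l = m i j l k ∧ m i j k l = m k l i j)
    (E11 E12 E13 E22 E23 : ℂ)
    (hE11 : E11 = ∫ z, z * φ₁ z ∂σ) (hE12 : E12 = ∫ z, z * φ₂ z ∂σ)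
    (hE13 : E13 = ∫ z, z * φ₃ z ∂σ)
    (hE22 : E22 = ∫ z, z * (starRingEnd ℂ) (φ₂ z) ∂σ)
    (hE23 : E23 = ∫ z, z * (starRingEnd ℂ) (φ₃ z) ∂σ) :
    E11.re = -(κ - 1) * E22.re ∧ E13.re = -E12.im ∧ E11.im = (κ - 1) * E23.re := by
  have hre {φ : ℂ → ℂ} (hφ : Integrable φ σ) : Integrable (fun z => (z.re : ℂ) * φ z) σ :=
    hφ.continuous_mul_of_measure_compl_eq_zero hK hσK (by fun_prop)
  have him {φ : ℂ → ℂ} (hφ : Integrable φ σ) : Integrable (fun z => (z.im : ℂ) * φ z) σ :=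
    hφ.continuous_mul_of_measure_compl_eq_zero hK hσK (by fun_prop)
  have h₁ := (hsym 0 0 1 1).2.2
  have h₂ := (hsym 0 1 0 0).2.2
  have h₃ := (hsym 0 1 1 1).2.2
  simp only [hm, hW11, hW12, hW22, hG11, hG22, hG21, conj_ofReal, re_integral_conj_I_mul_ofReal]
    at h₁ h₂ h₃
  rw [integral_mul_sub_mul _ _ (him hφ₁) (him hφ₂),
    integral_mul_add_mul _ _ (hre hφ₁) (hre hφ₂)] at h₁
  rw [integral_mul_const_mul, integral_mul_sub_mul _ _ (hre hφ₁) (hre hφ₂)] at h₂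
  rw [integral_mul_const_mul, integral_mul_add_mul _ _ (hre hφ₁) (hre hφ₂)] at h₃
  rw [integral_conj_mul_eq_re_sub_im (hre hφ₁) (him hφ₁)] at hrot₁
  rw [integral_conj_mul_eq_re_sub_im (hre hφ₂) (him hφ₂)] at hrot₂
  simp only [hE11, hE12, hE13, hE22, hE23, integral_mul_conj_eq_conj_integral,
    integral_conj_mul_eq_re_sub_im (hre hφ₂) (him hφ₂),
    integral_conj_mul_eq_re_sub_im (hre hφ₃) (him hφ₃),
    integral_mul_eq_re_add_im (hre hφ₁) (him hφ₁), integral_mul_eq_re_add_im (hre hφ₂) (him hφ₂),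
    integral_mul_eq_re_add_im (hre hφ₃) (him hφ₃)]
  exact moment_identities_of_symmetry hμ hκ hrot₁ hrot₂ h₁ h₂ h₃

/-- If the first-order elastic moment tensors satisfy the symmetries
`m^{ij}_{kl} = m^{ji}_{kl} = m^{ij}_{lk} = m^{kl}_{ij}`, then
`Re 𝔼^{(1,1)} = -(κ-1) Re 𝔼^{(2,2)}`, `Re 𝔼^{(1,3)} = -Im 𝔼^{(1,2)}`
and `Im 𝔼^{(1,1)} = (κ-1) Re 𝔼^{(2,3)}`. -/
theorem stmt_13 (σ : Measure ℂ) [IsFiniteMeasure σ]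
    (K : Set ℂ) (hK : IsCompact K) (hσK : σ Kᶜ = 0)
    (μ κ : ℝ) (hμ : 0 < μ) (hκ : 1 < κ)
    (φ₁ φ₂ φ₃ : ℂ → ℂ)
    (hφ₁ : Integrable φ₁ σ) (hφ₂ : Integrable φ₂ σ) (hφ₃ : Integrable φ₃ σ)
    (hmean₁ : ∫ z, φ₁ z ∂σ = 0) (hmean₂ : ∫ z, φ₂ z ∂σ = 0) (hmean₃ : ∫ z, φ₃ z ∂σ = 0)
    (hrot₁ : (∫ z, (starRingEnd ℂ) z * φ₁ z ∂σ).im = 0)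
    (hrot₂ : (∫ z, (starRingEnd ℂ) z * φ₂ z ∂σ).im = 0)
    (hrot₃ : (∫ z, (starRingEnd ℂ) z * φ₃ z ∂σ).im = 0)
    (G : Fin 2 → Fin 2 → ℂ → ℂ)
    (hG11 : ∀ z, G 0 0 z = ((μ / (κ - 1) : ℝ) : ℂ) * φ₁ z - (μ : ℂ) * φ₂ z)
    (hG22 : ∀ z, G 1 1 z = ((μ / (κ - 1) : ℝ) : ℂ) * φ₁ z + (μ : ℂ) * φ₂ z)
    (hG12 : ∀ z, G 0 1 z = (μ : ℂ) * φ₃ z)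
    (hG21 : ∀ z, G 1 0 z = (μ : ℂ) * φ₃ z)
    (W : Fin 2 → Fin 2 → ℂ → ℂ)
    (hW11 : ∀ z, W 0 0 z = (z.re : ℂ))
    (hW12 : ∀ z, W 0 1 z = Complex.I * (z.re : ℂ))
    (hW21 : ∀ z, W 1 0 z = (z.im : ℂ))
    (hW22 : ∀ z, W 1 1 z = Complex.I * (z.im : ℂ))
    (m : Fin 2 → Fin 2 → Fin 2 → Fin 2 → ℝ)
    (hm : ∀ i j k l, m i j k l = (∫ z, (starRingEnd ℂ) (W k l z) * G j i z ∂σ).re)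
    (hsym : ∀ i j k l, m i j k l = m j i k l ∧ m i j k l = m i j l k ∧ m i j k l = m k l i j)
    (E11 E12 E13 E22 E23 : ℂ)
    (hE11 : E11 = ∫ z, z * φ₁ z ∂σ) (hE12 : E12 = ∫ z, z * φ₂ z ∂σ)
    (hE13 : E13 = ∫ z, z * φ₃ z ∂σ)
    (hE22 : E22 = ∫ z, z * (starRingEnd ℂ) (φ₂ z) ∂σ)
    (hE23 : E23 = ∫ z, z * (starRingEnd ℂ) (φ₃ z) ∂σ) :
    E11.re = -(κ - 1) * E22.re ∧ E13.re = -E12.im ∧ E11.im = (κ - 1) * E23.re :=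
  stmt_13_general σ K hK hσK μ κ hμ hκ φ₁ φ₂ φ₃ hφ₁ hφ₂ hφ₃ hrot₁ hrot₂ G hG11 hG22 hG21 W hW11 hW12
    hW22 m hm hsym E11 E12 E13 E22 E23 hE11 hE12 hE13 hE22 hE23
end
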